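/- arXiv:1401.6840 — 3 statements merged into one kernel-verified Lean document; each statement's English description precedes it below -/
import Mathlib

section
/- Let P be a nonnegative irreducible square real matrix with spectral radius 1. Then the matrix M = I - P has a group inverse, i.e., there exists a matrix M# such that M M# M = M, M# M M# = M#, and M M# = M# M. -/
/-!
Write `M = 1 - P`. It suffices that `M ^ 2 x = 0` forces `M x = 0`: factoring the
characteristic polynomial as `X ^ e * q` with `q 0 ≠ 0`, this gives `M * q(M) = 0`, hence
`M * M * N = M` for a polynomial `N` in `M`, and `M * N * N` is the group inverse.

Suppose `M ^ 2 x = 0` and `y = M x ≠ 0`, so that `P y = y`. For `P` nonnegative and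
irreducible with spectral radius at most `1`, every nonnegative `u ≤ P u` is fixed by `P`:
otherwise irreducibility spreads the defect `P u - u` to every coordinate, giving
`α • u ≤ P ^ m u` with `α > 1`, and Gelfand's formula then forces `ρ(P) ^ m ≥ α`. A nonzero
nonnegative fixed vector is strictly positive, again by irreducibility. Applied to `y ⊔ 0`
(or to `(-y) ⊔ 0`), this makes `y` strictly positive up to sign. Then `x + C • y ≥ 0` for
large `C`, so `P ^ k (x + C • y) = x + (C - k) • y` stays nonnegative for all `k`, which is
absurd.
-/

open Matrix Polynomial Filter Topology
open scoped ENNReal NNReal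

lemma exists_one_lt_smul_le_of_forall_lt {ι : Type*} [Finite ι] {u w : ι → ℝ}
    (h : ∀ i, u i < w i) : ∃ α : ℝ, 1 < α ∧ α • u ≤ w := by
  have hev : ∀ᶠ α in 𝓝 (1 : ℝ), ∀ i, α * u i < w i := eventually_all.2 fun i =>
    (continuous_id.mul continuous_const).continuousAt.eventually_lt continuousAt_const
      (by simpa using h i)
  obtain ⟨α, hα, hα1⟩ :=
    ((hev.filter_mono (nhdsWithin_le_nhds (s := Set.Ioi 1))).and self_mem_nhdsWithin).exists
  exact ⟨α, hα1, fun i => (hα i).le⟩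

lemma exists_nonneg_add_smul_of_forall_pos {ι : Type*} [Finite ι] (x : ι → ℝ)
    {y : ι → ℝ} (hy : ∀ i, 0 < y i) : ∃ C : ℝ, 0 ≤ x + C • y := by
  have hev : ∀ᶠ C in atTop, ∀ i, 0 ≤ x i + C * y i := eventually_all.2 fun i =>
    (tendsto_atTop_add_const_left _ _ (tendsto_id.atTop_mul_const (hy i))).eventually_ge_atTop 0
  obtain ⟨C, hC⟩ := hev.exists
  exact ⟨C, hC⟩

lemma spectrum.spectralRadius_pow {𝕜 A : Type*} [NormedField 𝕜] [IsAlgClosed 𝕜] [Ring A]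
    [Algebra 𝕜 A] (a : A) {k : ℕ} (hk : k ≠ 0) :
    spectralRadius 𝕜 (a ^ k) = spectralRadius 𝕜 a ^ k := by
  refine le_antisymm ?_ (spectrum.spectralRadius_pow_le a k hk)
  rw [spectralRadius, spectrum.map_pow_of_pos a (Nat.pos_of_ne_zero hk)]
  refine iSup₂_le ?_
  rintro _ ⟨μ, hμ, rfl⟩
  rw [nnnorm_pow, ENNReal.coe_pow]
  exact pow_le_pow_left' (le_iSup₂ (f := fun μ (_ : μ ∈ spectrum 𝕜 a) => (‖μ‖₊ : ℝ≥0∞)) μ hμ) _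

lemma spectrum.ofReal_le_spectralRadius_of_mul_pow_le_norm_pow {A : Type*} [NormedRing A]
    [NormedAlgebra ℂ A] [CompleteSpace A] (a : A) {C α : ℝ} (hC : 0 < C) (hα : 0 ≤ α)
    (h : ∀ t : ℕ, C * α ^ t ≤ ‖a ^ t‖) : ENNReal.ofReal α ≤ spectralRadius ℂ a := by
  have hroot : Tendsto (fun t : ℕ => C ^ (t⁻¹ : ℝ)) atTop (𝓝 1) := by
    simpa [Function.comp_def] using (Real.continuousAt_const_rpow hC.ne').tendsto.comp
      (tendsto_inv_atTop_zero.comp tendsto_natCast_atTop_atTop)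
  refine le_of_tendsto_of_tendsto (by simpa using ENNReal.tendsto_ofReal (hroot.mul_const α))
    (spectrum.pow_norm_pow_one_div_tendsto_nhds_spectralRadius a) ?_
  filter_upwards [eventually_ne_atTop 0] with t ht
  refine ENNReal.ofReal_le_ofReal ?_
  calc C ^ (t⁻¹ : ℝ) * α = (C * α ^ t) ^ (t⁻¹ : ℝ) := by
        rw [Real.mul_rpow hC.le (pow_nonneg hα t), Real.pow_rpow_inv_natCast hα ht]
    _ ≤ ‖a ^ t‖ ^ (1 / t : ℝ) := by
        rw [one_div]
        exact Real.rpow_le_rpow (by positivity) (h t) (by positivity)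

lemma exists_groupInverse_of_commute_of_mul_mul_eq {M : Type*} [Semigroup M] {a b : M}
    (hab : Commute a b) (h : a * a * b = a) :
    ∃ s, a * s * a = a ∧ s * a * s = s ∧ a * s = s * a :=
  ⟨a * b * b, by grind [Commute], by grind [Commute], by grind [Commute]⟩

namespace Matrix

variable {n : Type*} [Fintype n]

lemma spectralRadius_le_of_forall_isRoot_charpoly {𝕜 : Type*} [NormedField 𝕜] [DecidableEq n]
    {A : Matrix n n 𝕜} {r : ℝ≥0} (h : ∀ μ, A.charpoly.IsRoot μ → ‖μ‖ ≤ r) :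
    spectralRadius 𝕜 A ≤ r :=
  iSup₂_le fun μ hμ => ENNReal.coe_le_coe.2 (h μ (mem_spectrum_iff_isRoot_charpoly.1 hμ))

section Nonneg

variable {A : Matrix n n ℝ}

lemma mulVec_mono (hA : ∀ i j, 0 ≤ A i j) : Monotone (A *ᵥ ·) := fun _ _ huv i =>
  dotProduct_le_dotProduct_of_nonneg_left huv (hA i)

lemma mulVec_nonneg (hA : ∀ i j, 0 ≤ A i j) {u : n → ℝ} (hu : 0 ≤ u) :
    0 ≤ A *ᵥ u := by
  simpa using mulVec_mono hA hu

lemma mulVec_apply_pos (hA : ∀ i j, 0 ≤ A i j) {u : n → ℝ} (hu : 0 ≤ u) {i j : n}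
    (hij : 0 < A i j) (hj : 0 < u j) : 0 < (A *ᵥ u) i :=
  (mul_pos hij hj).trans_le <| Finset.single_le_sum (f := fun l => A i l * u l)
    (fun l _ => mul_nonneg (hA i l) (hu l)) (Finset.mem_univ j)

variable [DecidableEq n]

lemma pow_mulVec_eq_self {u : n → ℝ} (h : A *ᵥ u = u) (k : ℕ) : A ^ k *ᵥ u = u := by
  induction k with
  | zero => simp
  | succ k ih => rw [pow_succ, ← mulVec_mulVec, h, ih]

lemma monotone_pow_mulVec (hA : ∀ i j, 0 ≤ A i j) {u : n → ℝ} (hu : u ≤ A *ᵥ u) :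
    Monotone fun k : ℕ => A ^ k *ᵥ u :=
  monotone_nat_of_le_succ fun k => by
    rw [pow_succ, ← mulVec_mulVec]
    exact mulVec_mono (pow_apply_nonneg hA k) hu

lemma pow_smul_le_pow_mulVec (hA : ∀ i j, 0 ≤ A i j) {u : n → ℝ} {α : ℝ} (hα : 0 ≤ α)
    (h : α • u ≤ A *ᵥ u) (t : ℕ) : α ^ t • u ≤ A ^ t *ᵥ u := by
  induction t with
  | zero => simp
  | succ t ih =>
    calc α ^ (t + 1) • u = α ^ t • (α • u) := by rw [pow_succ, mul_smul]
      _ ≤ α ^ t • (A *ᵥ u) := smul_le_smul_of_nonneg_left h (pow_nonneg hα t)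
      _ = A *ᵥ (α ^ t • u) := (mulVec_smul A _ u).symm
      _ ≤ A *ᵥ (A ^ t *ᵥ u) := mulVec_mono hA ih
      _ = A ^ (t + 1) *ᵥ u := by rw [mulVec_mulVec, pow_succ']

lemma map_ofReal_pow (A : Matrix n n ℝ) (k : ℕ) :
    (A ^ k).map Complex.ofReal = A.map Complex.ofReal ^ k :=
  A.map_pow Complex.ofRealHom k

lemma mulVec_ne_sub_of_forall_pos (hA : ∀ i j, 0 ≤ A i j) {x y : n → ℝ} (hy : A *ᵥ y = y)
    (hpos : ∀ i, 0 < y i) (i : n) : A *ᵥ x ≠ x - y := by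
  intro hx
  obtain ⟨C, hC⟩ := exists_nonneg_add_smul_of_forall_pos x hpos
  set z := x + C • y
  have hz : A *ᵥ z = z - y := by
    simp only [z, mulVec_add, mulVec_smul, hx, hy]
    abel
  have hpow : ∀ k : ℕ, A ^ k *ᵥ z = z - (k : ℝ) • y := by
    intro k
    induction k with
    | zero => simp
    | succ k ih =>
      rw [pow_succ', ← mulVec_mulVec, ih, mulVec_sub, mulVec_smul, hz, hy]
      push_cast
      module
  obtain ⟨k, hk⟩ := exists_nat_gt (z i / y i)
  have hzk := mulVec_nonneg (pow_apply_nonneg hA k) hC i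
  rw [hpow, Pi.sub_apply, Pi.smul_apply, smul_eq_mul, Pi.zero_apply, sub_nonneg] at hzk
  exact hk.not_ge ((le_div_iff₀ (hpos i)).2 hzk)

attribute [local instance] Matrix.linftyOpNormedRing Matrix.linftyOpNormedAlgebra

lemma ofReal_le_spectralRadius_of_smul_le_mulVec (hA : ∀ i j, 0 ≤ A i j) {u : n → ℝ}
    (hu : 0 ≤ u) (hu0 : u ≠ 0) {α : ℝ} (hα : 0 ≤ α) (h : α • u ≤ A *ᵥ u) :
    ENNReal.ofReal α ≤ spectralRadius ℂ (A.map Complex.ofReal) := by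
  obtain ⟨j, hj⟩ : ∃ j, 0 < u j := by
    by_contra! hle
    exact hu0 (le_antisymm hle hu)
  have hnorm : 0 < ‖u‖ := norm_pos_iff.2 hu0
  refine spectrum.ofReal_le_spectralRadius_of_mul_pow_le_norm_pow _ (div_pos hj hnorm) hα
    fun t => ?_
  calc u j / ‖u‖ * α ^ t = (α ^ t • u) j / ‖u‖ := by simp; ring
    _ ≤ ‖A ^ t *ᵥ u‖ / ‖u‖ := by
        gcongr
        exact (pow_smul_le_pow_mulVec hA hα h t j).trans
          ((Real.le_norm_self _).trans (norm_le_pi_norm _ j))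
    _ ≤ ‖A ^ t‖ := div_le_of_le_mul₀ hnorm.le (norm_nonneg _) (linfty_opNorm_mulVec _ _)
    _ = ‖A.map Complex.ofReal ^ t‖ := by
        rw [← map_ofReal_pow]
        simp [linfty_opNorm_def]

end Nonneg

section Irreducible

variable [DecidableEq n] {A : Matrix n n ℝ}

lemma exists_forall_lt_pow_mulVec (hA : ∀ i j, 0 ≤ A i j)
    (hirr : ∀ i j, ∃ k : ℕ, 0 < (A ^ k) i j) {u : n → ℝ} (hle : u ≤ A *ᵥ u)
    (hne : A *ᵥ u ≠ u) :
    ∃ m, ∀ j, u j < (A ^ m *ᵥ u) j := by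
  obtain ⟨i, hi⟩ := Function.ne_iff.1 hne
  have hmono := monotone_pow_mulVec hA hle
  choose k hk using fun j => hirr j i
  refine ⟨Finset.univ.sup k + 1, fun j => ?_⟩
  have hstep : (A ^ k j *ᵥ u) j < (A ^ (k j + 1) *ᵥ u) j := by
    have := mulVec_apply_pos (pow_apply_nonneg hA (k j)) (sub_nonneg.2 hle) (hk j)
      (sub_pos.2 ((hle i).lt_of_ne (Ne.symm hi)))
    rwa [mulVec_sub, mulVec_mulVec, ← pow_succ, Pi.sub_apply, sub_pos] at this
  calc u j ≤ (A ^ k j *ᵥ u) j := by simpa using hmono (Nat.zero_le (k j)) j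
    _ < (A ^ (k j + 1) *ᵥ u) j := hstep
    _ ≤ _ := hmono (Nat.succ_le_succ (Finset.le_sup (Finset.mem_univ j))) j

lemma pos_of_mulVec_eq_self_of_nonneg (hA : ∀ i j, 0 ≤ A i j)
    (hirr : ∀ i j, ∃ k : ℕ, 0 < (A ^ k) i j) {u : n → ℝ} (hu : 0 ≤ u) (h : A *ᵥ u = u)
    {j : n} (hj : 0 < u j) (i : n) : 0 < u i := by
  obtain ⟨k, hk⟩ := hirr i j
  simpa [pow_mulVec_eq_self h k] using mulVec_apply_pos (pow_apply_nonneg hA k) hu hk hj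

lemma mulVec_eq_self_of_le_mulVec (hA : ∀ i j, 0 ≤ A i j)
    (hirr : ∀ i j, ∃ k : ℕ, 0 < (A ^ k) i j)
    (hρ : spectralRadius ℂ (A.map Complex.ofReal) ≤ 1) {u : n → ℝ} (hu : 0 ≤ u)
    (hle : u ≤ A *ᵥ u) : A *ᵥ u = u := by
  by_contra hne
  obtain ⟨j, -⟩ := Function.ne_iff.1 hne
  obtain ⟨m, hm⟩ := exists_forall_lt_pow_mulVec hA hirr hle hne
  obtain ⟨α, hα1, hα⟩ := exists_one_lt_smul_le_of_forall_lt hm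
  have hm0 : m ≠ 0 := by
    rintro rfl
    simpa using hm j
  have hu0 : u ≠ 0 := by
    rintro rfl
    simp at hne
  have hαρ := ofReal_le_spectralRadius_of_smul_le_mulVec (pow_apply_nonneg hA m) hu hu0
    (zero_le_one.trans hα1.le) hα
  rw [map_ofReal_pow, spectrum.spectralRadius_pow _ hm0] at hαρ
  exact hα1.not_ge (ENNReal.ofReal_le_one.1 (hαρ.trans (pow_le_one₀ zero_le hρ)))

lemma pos_of_mulVec_eq_self (hA : ∀ i j, 0 ≤ A i j)
    (hirr : ∀ i j, ∃ k : ℕ, 0 < (A ^ k) i j)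
    (hρ : spectralRadius ℂ (A.map Complex.ofReal) ≤ 1) {y : n → ℝ} (hy : A *ᵥ y = y)
    {j : n} (hj : 0 < y j) (i : n) : 0 < y i := by
  have hle : y ⊔ 0 ≤ A *ᵥ (y ⊔ 0) :=
    sup_le (hy.ge.trans (mulVec_mono hA le_sup_left)) (mulVec_nonneg hA le_sup_right)
  have hfix := mulVec_eq_self_of_le_mulVec hA hirr hρ le_sup_right hle
  simpa using
    pos_of_mulVec_eq_self_of_nonneg hA hirr le_sup_right hfix (j := j) (by simpa using hj) i

lemma one_sub_mulVec_eq_zero_of_sq (hA : ∀ i j, 0 ≤ A i j)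
    (hirr : ∀ i j, ∃ k : ℕ, 0 < (A ^ k) i j)
    (hρ : spectralRadius ℂ (A.map Complex.ofReal) ≤ 1) {x : n → ℝ}
    (hx : (1 - A) *ᵥ ((1 - A) *ᵥ x) = 0) : (1 - A) *ᵥ x = 0 := by
  set y := (1 - A) *ᵥ x
  have hy : A *ᵥ y = y := by rwa [sub_mulVec, one_mulVec, sub_eq_zero, eq_comm] at hx
  have hxy : A *ᵥ x = x - y := by simp [y, sub_mulVec]
  by_contra hne
  obtain ⟨i, hi⟩ := Function.ne_iff.1 hne
  rcases lt_or_gt_of_ne (show y i ≠ 0 from hi) with hneg | hpos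
  · refine mulVec_ne_sub_of_forall_pos hA (y := -y) (by simp [mulVec_neg, hy])
      (pos_of_mulVec_eq_self hA hirr hρ (by simp [mulVec_neg, hy])
        (j := i) (by simpa using hneg)) i (x := -x) ?_
    simp only [mulVec_neg, hxy]
    abel
  · exact mulVec_ne_sub_of_forall_pos hA hy
      (pos_of_mulVec_eq_self hA hirr hρ hy hpos) i hxy

end Irreducible

section GroupInverse

variable [DecidableEq n] {K : Type*} [Field K]

lemma mul_eq_zero_of_pow_mul_eq_zero {M : Matrix n n K}
    (h : ∀ v, M *ᵥ (M *ᵥ v) = 0 → M *ᵥ v = 0) (e : ℕ) {B : Matrix n n K}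
    (hB : M ^ e * B = 0) : M * B = 0 := by
  induction e generalizing B with
  | zero => rw [pow_zero, one_mul] at hB; rw [hB, mul_zero]
  | succ e ih =>
    have hMMB : M * (M * B) = 0 := ih (by rwa [← mul_assoc, ← pow_succ])
    refine ext_of_mulVec_single fun i => ?_
    rw [← mulVec_mulVec, zero_mulVec]
    exact h _ (by rw [mulVec_mulVec, mulVec_mulVec, mul_assoc, hMMB, zero_mulVec])

lemma exists_commute_mul_mul_eq_self {M : Matrix n n K}
    (h : ∀ v, M *ᵥ (M *ᵥ v) = 0 → M *ᵥ v = 0) : ∃ N, Commute M N ∧ M * M * N = M := by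
  obtain ⟨q, hq, hndvd⟩ :=
    M.charpoly.exists_eq_pow_rootMultiplicity_mul_and_not_dvd M.charpoly_monic.ne_zero 0
  have hq0 : q.coeff 0 ≠ 0 := by simpa [X_dvd_iff] using hndvd
  have hMq : M * aeval M q = 0 := by
    refine mul_eq_zero_of_pow_mul_eq_zero h (M.charpoly.rootMultiplicity 0) ?_
    have hCH := aeval_self_charpoly M
    rwa [hq, C_0, sub_zero, map_mul, map_pow, aeval_X] at hCH
  have hsplit : M * aeval M q = M * M * aeval M q.divX + q.coeff 0 • M := by
    conv_lhs => rw [← X_mul_divX_add q]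
    rw [map_add, map_mul, aeval_X, aeval_C, Algebra.algebraMap_eq_smul_one, mul_add, ← mul_assoc,
      mul_smul_comm, mul_one]
  refine ⟨-(q.coeff 0)⁻¹ • aeval M q.divX, ?_, ?_⟩
  · exact (by simpa using (commute_X q.divX).map (aeval M) : Commute M _).smul_right _
  · rw [mul_smul_comm, eq_neg_of_add_eq_zero_left (hsplit.symm.trans hMq), smul_neg,
      neg_smul, neg_neg, smul_smul, inv_mul_cancel₀ hq0, one_smul]

end GroupInverse

end Matrix

theorem group_inverse_exists_of_irreducible_general
    {n : Type*} [Fintype n] [DecidableEq n] (P : Matrix n n ℝ)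
    (hnonneg : ∀ i j, 0 ≤ P i j)
    (hirr : ∀ i j, ∃ k : ℕ, 0 < (P ^ k) i j)
    (hspec_le : ∀ μ : ℂ, (P.map (Complex.ofReal)).charpoly.IsRoot μ → ‖μ‖ ≤ 1) :
    ∃ Msharp : Matrix n n ℝ,
      (1 - P) * Msharp * (1 - P) = (1 - P) ∧
      Msharp * (1 - P) * Msharp = Msharp ∧
      (1 - P) * Msharp = Msharp * (1 - P) := by
  have hρ : spectralRadius ℂ (P.map Complex.ofReal) ≤ 1 := by
    simpa using
      Matrix.spectralRadius_le_of_forall_isRoot_charpoly (r := 1) (by simpa using hspec_le)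
  obtain ⟨N, hcomm, hN⟩ := Matrix.exists_commute_mul_mul_eq_self fun x =>
    Matrix.one_sub_mulVec_eq_zero_of_sq hnonneg hirr hρ (x := x)
  exact exists_groupInverse_of_commute_of_mul_mul_eq hcomm hN

/-- If `P` is a nonnegative irreducible square real matrix with spectral
radius 1, then `M = I - P` has a group inverse. -/
theorem group_inverse_exists_of_irreducible
    {n : Type*} [Fintype n] [DecidableEq n] (P : Matrix n n ℝ)
    (hnonneg : ∀ i j, 0 ≤ P i j)
    (hirr : ∀ i j, ∃ k : ℕ, 0 < (P ^ k) i j)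
    (hspec_le : ∀ μ : ℂ, (P.map (Complex.ofReal)).charpoly.IsRoot μ → ‖μ‖ ≤ 1)
    (hspec_eq : ∃ μ : ℂ, (P.map (Complex.ofReal)).charpoly.IsRoot μ ∧ ‖μ‖ = 1) :
    ∃ Msharp : Matrix n n ℝ,
      (1 - P) * Msharp * (1 - P) = (1 - P) ∧
      Msharp * (1 - P) * Msharp = Msharp ∧
      (1 - P) * Msharp = Msharp * (1 - P) :=
  group_inverse_exists_of_irreducible_general P hnonneg hirr hspec_le
end

section
/- A square matrix M over a field has a group inverse if and only if M and M^2 have the same rank. -/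
open Matrix
lemma aux_factor
    {n : Type*} [Fintype n] [DecidableEq n] {K : Type*} [Field K]
    (M : Matrix n n K) (h : M.rank = (M * M).rank) :
    ∃ U : Matrix n n K, M * M * U = M := by
  have hle : LinearMap.range (M * M).mulVecLin ≤ LinearMap.range M.mulVecLin := by
    rw [Matrix.mulVecLin_mul]
    exact LinearMap.range_comp_le_range _ _
  have heq : LinearMap.range (M * M).mulVecLin = LinearMap.range M.mulVecLin :=
    Submodule.eq_of_le_of_finrank_eq hle h.symm
  have hcol : ∀ j : n, ∃ u : n → K, (M * M).mulVec u = fun i => M i j := by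
    intro j
    have hmem : (fun i => M i j) ∈ LinearMap.range M.mulVecLin := by
      exact ⟨Pi.single j 1, by ext i; simp [Matrix.mulVecLin, Matrix.mulVec_single]⟩
    rw [← heq] at hmem
    obtain ⟨u, hu⟩ := hmem
    exact ⟨u, hu⟩
  choose u hu using hcol
  refine ⟨Matrix.of fun i j => u j i, ?_⟩
  ext i j
  have := congrFun (hu j) i
  simpa [Matrix.mul_apply, Matrix.mulVec, dotProduct] using this

/-- A square matrix over a field has a group inverse iff `M` and `M^2`
have the same rank. -/
theorem group_inverse_iff_rank_eq
    {n : Type*} [Fintype n] [DecidableEq n] {K : Type*} [Field K]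
    (M : Matrix n n K) :
    (∃ Msharp : Matrix n n K,
        M * Msharp * M = M ∧ Msharp * M * Msharp = Msharp ∧ M * Msharp = Msharp * M)
      ↔ M.rank = (M * M).rank := by
  constructor
  · rintro ⟨G, h1, _h2, h3⟩
    refine le_antisymm ?_ (Matrix.rank_mul_le_left M M)
    have hM : M * M * G = M := by
      calc M * M * G = M * (M * G) := by rw [mul_assoc]
        _ = M * (G * M) := by rw [h3]
        _ = M * G * M := by rw [mul_assoc]
        _ = M := h1
    calc M.rank = (M * M * G).rank := by rw [hM]
      _ ≤ (M * M).rank := Matrix.rank_mul_le_left _ _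
  · intro h
    obtain ⟨U, hU⟩ := aux_factor M h
    obtain ⟨V', hV'⟩ := aux_factor Mᵀ (by
      rw [Matrix.rank_transpose, h, ← Matrix.transpose_mul, Matrix.rank_transpose])
    set V : Matrix n n K := V'ᵀ with hVdef
    have hV : V * (M * M) = M := by
      have := congrArg Matrix.transpose hV'
      simpa [Matrix.transpose_mul, mul_assoc] using this
    -- key identity: M * U = V * M
    have hP : M * U = V * M := by
      calc M * U = V * (M * M) * U := by rw [hV]
        _ = V * (M * M * U) := by rw [mul_assoc]
        _ = V * M := by rw [hU]
    have hMVM : M * V * M = M := by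
      calc M * V * M = M * (V * M) := by rw [mul_assoc]
        _ = M * (M * U) := by rw [hP]
        _ = M * M * U := by rw [mul_assoc]
        _ = M := hU
    have hMUM : M * U * M = M := by
      calc M * U * M = V * M * M := by rw [hP]
        _ = V * (M * M) := by rw [mul_assoc]
        _ = M := hV
    refine ⟨V * M * U, ?_, ?_, ?_⟩
    · calc M * (V * M * U) * M = (M * V * M) * (U * M) := by
            simp only [mul_assoc]
        _ = M * (U * M) := by rw [hMVM]
        _ = M * U * M := by rw [mul_assoc]
        _ = M := hMUM
    · calc (V * M * U) * M * (V * M * U)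
          = V * ((M * U * M) * V * M * U) := by simp only [mul_assoc]
        _ = V * (M * V * M * U) := by rw [hMUM]
        _ = V * (M * U) := by rw [hMVM]
        _ = V * M * U := by rw [mul_assoc]
    · have hl : M * (V * M * U) = M * U := by
        calc M * (V * M * U) = (M * V * M) * U := by simp only [mul_assoc]
          _ = M * U := by rw [hMVM]
      have hr : (V * M * U) * M = V * M := by
        calc (V * M * U) * M = V * (M * U * M) := by simp only [mul_assoc]
          _ = V * M := by rw [hMUM]
      rw [hl, hr, hP]
end

section
/- Let A ∈ [0,1]^{D×D} be a stochastic irreducible matrix over a finite set D, let y_min be the smallest nonzero entry of A, and let e_max ≥ 2 be a constant. Suppose g ∈ ℝ^D and r ∈ ℝ^D satisfy g = r + A g with |r[p]| ≤ e_max for all p. If q ∈ D achieves the maximum value g_max of g, then for every state p at directed-graph distance i from q (in the graph induced by the transposed nonzero pattern of A, i.e., reachable in i steps backwards along A), we have g[p] ≥ g_max − e_max·i / y_min^i. -/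
open Matrix

/-- `reachIn A q p i`: there is a directed path of length `i` from `q` to `p` in the
graph with an edge `(r,s)` whenever `A r s > 0`. -/
def reachIn {D : Type*} (A : Matrix D D ℝ) (q p : D) (i : ℕ) : Prop :=
  ∃ x : ℕ → D, x 0 = q ∧ x i = p ∧ ∀ j < i, 0 < A (x j) (x (j + 1))

/-- lower bound on components of a solution of the Poisson equation
in terms of their graph distance from a maximizing state. -/
theorem poisson_solution_lower_bound
    {D : Type*} [Fintype D] [DecidableEq D] (A : Matrix D D ℝ) (g r : D → ℝ)
    (y_min e_max g_max : ℝ)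
    (hA01 : ∀ p q', 0 ≤ A p q' ∧ A p q' ≤ 1)
    (hstoch : ∀ p, ∑ q', A p q' = 1)
    (hirr : ∀ p q', ∃ k : ℕ, 0 < (A ^ k) p q')
    (hymin_pos : 0 < y_min)
    (hymin : ∀ p q', A p q' ≠ 0 → y_min ≤ A p q')
    (hymin_attained : ∃ p q', A p q' = y_min)
    (hemax : 2 ≤ e_max)
    (hg : g = r + A *ᵥ g)
    (hr : ∀ p, |r p| ≤ e_max)
    (q : D) (hq : g q = g_max) (hqmax : ∀ p, g p ≤ g_max) :
    ∀ (p : D) (i : ℕ),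
      reachIn A q p i → (∀ j < i, ¬ reachIn A q p j) →
      g p ≥ g_max - e_max * i / y_min ^ i := by
  obtain ⟨p0, q0, hpq0⟩ := hymin_attained
  have hy1 : y_min ≤ 1 := hpq0 ▸ (hA01 p0 q0).2
  have hemax0 : (0:ℝ) < e_max := by linarith
  -- key one-step lemma
  have step : ∀ s p : D, 0 < A s p → ∀ c : ℝ, 0 ≤ c → g_max - c ≤ g s →
      g_max - (c + e_max) / y_min ≤ g p := by
    intro s p hsp c hc hgs
    have hAy : y_min ≤ A s p := hymin s p (ne_of_gt hsp)
    have hge : g s = r s + ∑ q', A s q' * g q' := by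
      conv_lhs => rw [hg]
      simp [Matrix.mulVec, dotProduct]
    have herase : ∑ q' ∈ Finset.univ.erase p, A s q' = 1 - A s p := by
      rw [Finset.sum_erase_eq_sub (Finset.mem_univ p), hstoch s]
    have hsum : ∑ q', A s q' * g q' ≤ A s p * g p + (1 - A s p) * g_max := by
      rw [← Finset.add_sum_erase _ (fun q' => A s q' * g q') (Finset.mem_univ p)]
      have h1 : ∑ q' ∈ Finset.univ.erase p, A s q' * g q'
          ≤ ∑ q' ∈ Finset.univ.erase p, A s q' * g_max :=
        Finset.sum_le_sum fun q' _ =>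
          mul_le_mul_of_nonneg_left (hqmax q') (hA01 s q').1
      rw [← Finset.sum_mul, herase] at h1
      linarith
    have hrs : r s ≤ e_max := le_trans (le_abs_self _) (hr s)
    have hcross : A s p * (g_max - g p) ≤ c + e_max := by nlinarith
    have hmono : y_min * (g_max - g p) ≤ A s p * (g_max - g p) :=
      mul_le_mul_of_nonneg_right hAy (by linarith [hqmax p])
    have : g_max - g p ≤ (c + e_max) / y_min := by
      rw [le_div_iff₀ hymin_pos]; nlinarith
    linarith
  have key : ∀ (i : ℕ) (p : D), reachIn A q p i →
      g_max - e_max * i / y_min ^ i ≤ g p := by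
    intro i
    induction i with
    | zero =>
      intro p ⟨x, hx0, hxi, _⟩
      rw [← hxi, hx0, hq]; simp
    | succ i ih =>
      intro p ⟨x, hx0, hxi, hpos⟩
      have hs : reachIn A q (x i) i :=
        ⟨x, hx0, rfl, fun j hj => hpos j (Nat.lt_succ_of_lt hj)⟩
      have hgs := ih (x i) hs
      have hyp : (0:ℝ) < y_min ^ i := pow_pos hymin_pos i
      have hc : (0:ℝ) ≤ e_max * i / y_min ^ i := by positivity
      have hedge : 0 < A (x i) p := hxi ▸ hpos i (Nat.lt_succ_self i)
      have hstep := step (x i) p hedge _ hc hgs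
      have hle : (e_max * i / y_min ^ i + e_max) / y_min
          ≤ e_max * (i + 1 : ℕ) / y_min ^ (i + 1) := by
        have hple : y_min ^ i ≤ 1 := pow_le_one₀ hymin_pos.le hy1
        rw [div_le_div_iff₀ hymin_pos (by positivity), div_add' _ _ _ (ne_of_gt hyp),
          div_mul_eq_mul_div, div_le_iff₀ hyp]
        push_cast
        have h2 : y_min ^ (i * 2) ≤ y_min ^ i := by
          rw [mul_comm, pow_mul]
          exact pow_le_pow_left₀ (by positivity) (by nlinarith) i
        ring_nf
        nlinarith [mul_pos hemax0 hymin_pos]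
      linarith
  intro p i hreach _
  exact key i p hreach
end
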